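/- arXiv:1005.1440 — 6 statements merged into one kernel-verified Lean document; each statement's English description precedes it below -/
import Mathlib

section
/- Let d be a positive integer and λ a real number with d < λ (and 1 ≤ d). Then the partial sum of the Poisson series satisfies ∑_{y=0}^{d-1} λ^y / y! ≤ (λ / (λ - d)) · (λ^{d-1} / (d-1)!). -/
/-!
Going down from `y = d - 1`, each term `λ^y / y!` shrinks by the factor `(y + 1) / λ ≤ d / λ < 1`,
so the partial sum is at most its last term times the geometric series `1 / (1 - d / λ) = λ / (λ - d)`.
-/

open Finset Nat

theorem sum_range_succ_le_div_one_sub {t : ℕ → ℝ} {q : ℝ} (hq0 : 0 ≤ q) (hq1 : q < 1)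
    (ht0 : 0 ≤ t 0) (n : ℕ) (ht : ∀ k < n, t k ≤ q * t (k + 1)) :
    ∑ k ∈ range (n + 1), t k ≤ t n / (1 - q) := by
  have h1q : 0 < 1 - q := by linarith
  induction n with
  | zero =>
    rw [sum_range_one, le_div_iff₀ h1q]
    nlinarith
  | succ n ih =>
    have ih := ih fun k hk => ht k (by omega)
    have hn := ht n (by omega)
    calc ∑ k ∈ range (n + 2), t k = ∑ k ∈ range (n + 1), t k + t (n + 1) := sum_range_succ _ _
      _ ≤ q * t (n + 1) / (1 - q) + t (n + 1) := by gcongr; exact ih.trans (by gcongr)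
      _ = t (n + 1) / (1 - q) := by field_simp; ring

theorem pow_div_factorial_le_mul_pow_succ_div_factorial {x : ℝ} (hx : 0 < x) {k d : ℕ}
    (hkd : k + 1 ≤ d) :
    x ^ k / k ! ≤ d / x * (x ^ (k + 1) / (k + 1)!) := by
  have hd : ((k + 1 : ℕ) : ℝ) ≤ d := by exact_mod_cast hkd
  rw [factorial_succ, cast_mul, pow_succ]
  calc x ^ k / k ! = x ^ k / k ! * 1 := (mul_one _).symm
    _ ≤ x ^ k / k ! * (d / (k + 1 : ℕ)) := by
        gcongr
        rw [one_le_div (by positivity)]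
        exact hd
    _ = d / x * (x ^ k * x / ((k + 1 : ℕ) * k !)) := by field_simp

theorem stmt_2_general (d : ℕ) (lam : ℝ) (hlam : (d : ℝ) < lam) :
    ∑ y ∈ Finset.range d, lam ^ y / (Nat.factorial y)
      ≤ (lam / (lam - d)) * (lam ^ (d - 1) / (Nat.factorial (d - 1))) := by
  have hlam0 : 0 < lam := d.cast_nonneg.trans_lt hlam
  have hq1 : d / lam < 1 := (div_lt_one hlam0).2 hlam
  cases d with
  | zero => simp [hlam0.ne']
  | succ n =>
    calc ∑ y ∈ range (n + 1), lam ^ y / y !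
        ≤ lam ^ n / n ! / (1 - (n + 1 : ℕ) / lam) :=
          sum_range_succ_le_div_one_sub (by positivity) hq1 (by simp) n
            fun k hk => pow_div_factorial_le_mul_pow_succ_div_factorial hlam0 (by omega)
      _ = lam / (lam - (n + 1 : ℕ)) * (lam ^ n / n !) := by
          rw [one_sub_div hlam0.ne']
          field_simp

/-- For a positive integer `d` and a real `λ > d`,
`∑_{y=0}^{d-1} λ^y / y! ≤ (λ/(λ-d)) (λ^{d-1}/(d-1)!)`. -/
theorem stmt_2 (d : ℕ) (hd : 1 ≤ d) (lam : ℝ) (hlam : (d : ℝ) < lam) :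
    ∑ y ∈ Finset.range d, lam ^ y / (Nat.factorial y)
      ≤ (lam / (lam - d)) * (lam ^ (d - 1) / (Nat.factorial (d - 1))) :=
  stmt_2_general d lam hlam
end

section
/- Let k = 2d be an even positive integer, let 0 < ε < 1, and let Y₁, …, Y_k be i.i.d. standard normal random variables on a probability space (Ω, P). Then, with λ₁ = k(1+ε)/2, the right tail of the chi-squared statistic satisfies P( ∑_{j=1}^k Y_j² ≥ k(1+ε) ) ≤ ((1+ε)/ε) · e^{-λ₁} · λ₁^{d-1} / (d-1)!. -/
/-!
In polar coordinates, `P(∑ Yⱼ² ≥ a)` is `∫_{√a}^∞ r^{k-1} e^{-r²/2} dr` up to a constant factor,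
which is fixed by taking `a = 0`. For `k = 2d` the
integrand has the explicit antiderivative `-2^{d-1} (d-1)! e^{-s} ∑_{i<d} s^i/i!` in `s = r²/2`,
so the tail is the Poisson probability `e^{-λ} ∑_{i<d} λ^i/i!` with `λ = a/2`. Consecutive terms of
this sum grow at least by the factor `λ/(d-1)`, so it is dominated by a geometric series:
`∑_{i<d} λ^i/i! ≤ λ/(λ-(d-1)) · λ^{d-1}/(d-1)!`, and `λ/(λ-(d-1)) ≤ (1+ε)/ε` for `λ = d(1+ε)`.
-/

open MeasureTheory ProbabilityTheory Real Set Filter Finset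
open scoped ENNReal Topology Nat

theorem MeasureTheory.lintegral_fin_nat_prod_eq_prod {α : Type*} [MeasurableSpace α] {n : ℕ}
    (μ : Fin n → Measure α) [∀ i, SigmaFinite (μ i)]
    {f : Fin n → α → ℝ≥0∞} (hf : ∀ i, Measurable (f i)) :
    ∫⁻ x, ∏ i, f i (x i) ∂(Measure.pi μ) = ∏ i, ∫⁻ x, f i x ∂(μ i) := by
  induction n with
  | zero => simp
  | succ n ih =>
    calc
      _ = ∫⁻ x : α × (Fin n → α), f 0 x.1 * ∏ i : Fin n, f i.succ (x.2 i)
          ∂((μ 0).prod (Measure.pi fun i ↦ μ i.succ)) := by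
        rw [← ((measurePreserving_piFinSuccAbove μ 0).symm).lintegral_comp_emb
          (MeasurableEquiv.measurableEmbedding _)]
        simp_rw [MeasurableEquiv.piFinSuccAbove_symm_apply, Fin.insertNthEquiv,
          Fin.prod_univ_succ, Fin.insertNth_zero]
        simp only [Fin.zero_succAbove, Equiv.coe_fn_mk, Fin.cons_zero, Fin.cons_succ, cast_eq]
      _ = (∫⁻ x, f 0 x ∂μ 0) * ∏ i : Fin n, ∫⁻ x, f i.succ x ∂(μ i.succ) := by
        rw [lintegral_prod_mul (f := f 0) (g := fun y : Fin n → α ↦ ∏ i, f i.succ (y i))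
          (hf 0).aemeasurable (Finset.measurable_prod _
            fun i _ ↦ (hf i.succ).comp (measurable_pi_apply i)).aemeasurable,
          ih _ fun i ↦ hf i.succ]
      _ = ∏ i, ∫⁻ x, f i x ∂(μ i) := by rw [Fin.prod_univ_succ]

theorem MeasureTheory.Measure.pi_withDensity {α : Type*} [MeasurableSpace α] {n : ℕ}
    (μ : Fin n → Measure α) [∀ i, SigmaFinite (μ i)]
    {f : Fin n → α → ℝ≥0∞} (hf : ∀ i, Measurable (f i))
    [∀ i, SigmaFinite ((μ i).withDensity (f i))] :
    Measure.pi (fun i ↦ (μ i).withDensity (f i))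
      = (Measure.pi μ).withDensity (fun x ↦ ∏ i, f i (x i)) := by
  refine Measure.pi_eq fun s hs ↦ ?_
  rw [withDensity_apply _ (.univ_pi hs), ← lintegral_indicator (.univ_pi hs)]
  have hindicator : (univ.pi s).indicator (fun x ↦ ∏ i, f i (x i))
      = fun x ↦ ∏ i, (s i).indicator (f i) (x i) := by
    ext x
    by_cases h : x ∈ univ.pi s
    · rw [indicator_of_mem h]
      exact Finset.prod_congr rfl fun i _ ↦ (indicator_of_mem (h i trivial) _).symm
    · obtain ⟨i, hi⟩ := not_forall.mp (mt Set.mem_univ_pi.mpr h)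
      rw [indicator_of_notMem h]
      exact (Finset.prod_eq_zero (Finset.mem_univ i) (indicator_of_notMem hi _)).symm
  rw [hindicator, lintegral_fin_nat_prod_eq_prod μ fun i ↦ (hf i).indicator (hs i)]
  exact Finset.prod_congr rfl fun i _ ↦ by
    rw [withDensity_apply _ (hs i), lintegral_indicator (hs i)]

theorem pi_gaussianReal_eq_withDensity (n : ℕ) :
    Measure.pi (fun _ : Fin n ↦ gaussianReal 0 1)
      = volume.withDensity fun x ↦ ∏ i, gaussianPDF 0 1 (x i) := by
  have : SigmaFinite (volume.withDensity (gaussianPDF 0 1)) := SigmaFinite.withDensity_ofReal _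
  simp_rw [gaussianReal_of_var_ne_zero 0 one_ne_zero]
  rw [Measure.pi_withDensity _ fun _ ↦ measurable_gaussianPDF 0 1, volume_pi]

theorem exists_integral_pi_gaussianReal_comp_sum_sq {n : ℕ} (hn : 0 < n) :
    ∃ c : ℝ, ∀ g : ℝ → ℝ,
      ∫ x, g (∑ i, x i ^ 2) ∂(Measure.pi fun _ : Fin n ↦ gaussianReal 0 1)
        = c * ∫ r in Ioi 0, r ^ (n - 1) * (exp (-r ^ 2 / 2) * g (r ^ 2)) := by
  have : Nontrivial (EuclideanSpace ℝ (Fin n)) :=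
    Module.nontrivial_of_finrank_pos (R := ℝ) (by rwa [finrank_euclideanSpace_fin])
  set C : ℝ := (√(2 * π))⁻¹ ^ n
  refine ⟨n * volume.real (Metric.ball (0 : EuclideanSpace ℝ (Fin n)) 1) * C, fun g ↦ ?_⟩
  have hdensity (x : Fin n → ℝ) :
      (∏ i, gaussianPDF 0 1 (x i)).toReal = C * exp (-(∑ i, x i ^ 2) / 2) := by
    simp only [ENNReal.toReal_prod, toReal_gaussianPDF, gaussianPDFReal, NNReal.coe_one,
      mul_one, sub_zero]
    rw [Finset.prod_mul_distrib, Finset.prod_const, Finset.card_univ, Fintype.card_fin,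
      ← Real.exp_sum, ← Finset.sum_div, ← Finset.sum_neg_distrib]
  have hnorm (x : Fin n → ℝ) : ∑ i, x i ^ 2 = ‖WithLp.toLp 2 x‖ ^ 2 := by
    simp [EuclideanSpace.real_norm_sq_eq]
  calc ∫ x, g (∑ i, x i ^ 2) ∂(Measure.pi fun _ : Fin n ↦ gaussianReal 0 1)
      = ∫ x : Fin n → ℝ, C * exp (-(∑ i, x i ^ 2) / 2) * g (∑ i, x i ^ 2) := by
        rw [pi_gaussianReal_eq_withDensity, integral_withDensity_eq_integral_toReal_smul
          (by fun_prop) (ae_of_all _ fun x ↦ by simp [ENNReal.prod_lt_top, gaussianPDF_lt_top])]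
        simp_rw [hdensity, smul_eq_mul]
    _ = ∫ y : EuclideanSpace ℝ (Fin n), C * exp (-‖y‖ ^ 2 / 2) * g (‖y‖ ^ 2) := by
        rw [← (PiLp.volume_preserving_toLp (Fin n)).integral_comp
          (MeasurableEquiv.toLp 2 (Fin n → ℝ)).measurableEmbedding]
        simp_rw [hnorm]
    _ = _ := by
        rw [integral_fun_norm_addHaar volume (fun r ↦ C * exp (-r ^ 2 / 2) * g (r ^ 2)),
          finrank_euclideanSpace_fin, nsmul_eq_mul, smul_eq_mul, ← integral_const_mul,
          ← integral_const_mul, ← integral_const_mul]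
        refine integral_congr_ae (ae_of_all _ fun r ↦ ?_)
        simp only [smul_eq_mul]
        ring

theorem pi_gaussianReal_real_le_sum_sq_eq_div {n : ℕ} (hn : 0 < n) (a : ℝ) :
    (Measure.pi fun _ : Fin n ↦ gaussianReal 0 1).real {x | a ≤ ∑ i, x i ^ 2}
      = (∫ r in Ioi √a, r ^ (n - 1) * exp (-r ^ 2 / 2))
          / ∫ r in Ioi 0, r ^ (n - 1) * exp (-r ^ 2 / 2) := by
  obtain ⟨c, hc⟩ := exists_integral_pi_gaussianReal_comp_sum_sq hn
  have htotal : 1 = c * ∫ r in Ioi 0, r ^ (n - 1) * exp (-r ^ 2 / 2) := by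
    simpa using hc 1
  have htail := hc ((Ici a).indicator 1)
  have hindicator : ∀ r ∈ Ioi (0 : ℝ),
      r ^ (n - 1) * (exp (-r ^ 2 / 2) * (Ici a).indicator 1 (r ^ 2))
        = (Ici √a).indicator (fun r ↦ r ^ (n - 1) * exp (-r ^ 2 / 2)) r := by
    intro r hr
    simp only [Set.indicator_apply, Set.mem_Ici, Real.sqrt_le_left (le_of_lt hr), Pi.one_apply]
    split_ifs <;> simp
  have hset : (Ioi 0 ∩ Ici √a : Set ℝ) =ᵐ[volume] (Ioi √a : Set ℝ) := by
    rw [← Set.inter_eq_right.mpr (Ioi_subset_Ioi (Real.sqrt_nonneg a))]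
    exact (ae_eq_refl _).inter Ioi_ae_eq_Ici.symm
  rw [setIntegral_congr_fun measurableSet_Ioi hindicator, setIntegral_indicator measurableSet_Ici,
    setIntegral_congr_set hset] at htail
  have hmeas : MeasurableSet {x : Fin n → ℝ | a ≤ ∑ i, x i ^ 2} :=
    measurableSet_le measurable_const (by fun_prop)
  have hT0 : ∫ r in Ioi 0, r ^ (n - 1) * exp (-r ^ 2 / 2) ≠ 0 :=
    right_ne_zero_of_mul (htotal ▸ one_ne_zero)
  rw [← integral_indicator_one hmeas]
  change ∫ x : Fin n → ℝ, (Ici a).indicator 1 (∑ i, x i ^ 2) ∂_ = _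
  rw [htail, eq_div_iff hT0, mul_right_comm, ← htotal, one_mul]

theorem hasDerivAt_sum_range_pow_div_factorial (m : ℕ) (s : ℝ) :
    HasDerivAt (fun s : ℝ ↦ ∑ i ∈ range (m + 1), s ^ i / i !) (∑ i ∈ range m, s ^ i / i !) s := by
  induction m with
  | zero => simpa using hasDerivAt_const s (1 : ℝ)
  | succ m ih =>
    simp_rw [sum_range_succ _ (m + 1)]
    rw [sum_range_succ _ m]
    refine ih.fun_add ?_
    refine ((hasDerivAt_pow (m + 1) s).div_const ((m + 1)! : ℝ)).congr_deriv ?_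
    rw [Nat.factorial_succ, Nat.cast_mul, Nat.add_sub_cancel]
    field_simp

theorem hasDerivAt_exp_neg_mul_sum_range_pow_div_factorial (m : ℕ) (s : ℝ) :
    HasDerivAt (fun s ↦ exp (-s) * ∑ i ∈ range (m + 1), s ^ i / i !)
      (-(exp (-s) * (s ^ m / m !))) s := by
  refine ((hasDerivAt_neg s).exp.mul
    (hasDerivAt_sum_range_pow_div_factorial m s)).congr_deriv ?_
  rw [sum_range_succ]
  ring

theorem tendsto_exp_neg_mul_sum_range_pow_div_factorial (m : ℕ) :
    Tendsto (fun s ↦ exp (-s) * ∑ i ∈ range (m + 1), s ^ i / i !) atTop (𝓝 0) := by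
  simp_rw [mul_sum]
  rw [← sum_const_zero (s := range (m + 1))]
  refine tendsto_finsetSum _ fun i _ ↦ ?_
  convert (tendsto_pow_mul_exp_neg_atTop_nhds_zero i).div_const (i ! : ℝ) using 2 with s
  · ring
  · simp

theorem integral_Ioi_pow_mul_exp_neg_sq_div_two (m : ℕ) (b : ℝ) :
    ∫ r in Ioi b, r ^ (2 * m + 1) * exp (-r ^ 2 / 2)
      = 2 ^ m * m ! * (exp (-(b ^ 2 / 2)) * ∑ i ∈ range (m + 1), (b ^ 2 / 2) ^ i / i !) := by
  set G : ℝ → ℝ := fun s ↦ exp (-s) * ∑ i ∈ range (m + 1), s ^ i / (i ! : ℝ)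
  have hderiv (r : ℝ) : HasDerivAt (fun r ↦ -(2 ^ m * m ! * G (r ^ 2 / 2)))
      (r ^ (2 * m + 1) * exp (-r ^ 2 / 2)) r := by
    have hsq : HasDerivAt (fun r : ℝ ↦ r ^ 2 / 2) r r := by
      simpa using (hasDerivAt_pow 2 r).div_const 2
    refine (((hasDerivAt_exp_neg_mul_sum_range_pow_div_factorial m _).comp r hsq).const_mul
      (2 ^ m * m ! : ℝ)).neg.congr_deriv ?_
    field_simp
    rw [div_pow, ← pow_mul]
    field_simp
    ring
  have hint : IntegrableOn (fun r ↦ r ^ (2 * m + 1) * exp (-r ^ 2 / 2)) (Ioi b) := by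
    have := integrable_rpow_mul_exp_neg_mul_sq (b := 1 / 2) (by norm_num)
      (s := ((2 * m + 1 : ℕ) : ℝ)) (neg_one_lt_zero.trans_le (Nat.cast_nonneg _))
    refine (this.congr (ae_of_all _ fun r ↦ ?_)).integrableOn
    simp only [rpow_natCast]
    ring_nf
  have hlim : Tendsto (fun r ↦ -(2 ^ m * m ! * G (r ^ 2 / 2))) atTop (𝓝 0) := by
    simpa using ((tendsto_exp_neg_mul_sum_range_pow_div_factorial m).comp
      ((tendsto_pow_atTop two_ne_zero).atTop_div_const two_pos)).const_mul
        (2 ^ m * m ! : ℝ) |>.neg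
  rw [integral_Ioi_of_hasDerivAt_of_tendsto' (fun r _ ↦ hderiv r) hint hlim]
  ring

theorem sum_range_pow_div_factorial_le {m : ℕ} {x : ℝ} (hx : m < x) :
    ∑ i ∈ range (m + 1), x ^ i / i ! ≤ x / (x - m) * (x ^ m / m !) := by
  have hx0 : 0 < x := lt_of_le_of_lt m.cast_nonneg hx
  have hxm : 0 < x - m := sub_pos.mpr hx
  suffices ∀ k ≤ m, ∑ i ∈ range (k + 1), x ^ i / i ! ≤ x / (x - m) * (x ^ k / k !) from
    this m le_rfl
  intro k
  induction k with
  | zero =>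
    intro _
    simp only [zero_add, sum_range_one, pow_zero, Nat.factorial_zero, Nat.cast_one, div_one,
      mul_one]
    rw [le_div_iff₀ hxm]
    linarith [m.cast_nonneg (α := ℝ)]
  | succ k ih =>
    intro hk
    have hkm : ((k + 1 : ℕ) : ℝ) ≤ m := by exact_mod_cast hk
    have hstep : x ^ k / k ! ≤ m / x * (x ^ (k + 1) / (k + 1)!) := by
      rw [Nat.factorial_succ, Nat.cast_mul, pow_succ]
      rw [show m / x * (x ^ k * x / ((k + 1 : ℕ) * k !)) = m / (k + 1 : ℕ) * (x ^ k / k !) by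
        field_simp]
      exact le_mul_of_one_le_left (by positivity) ((one_le_div (by positivity)).mpr hkm)
    calc ∑ i ∈ range (k + 1 + 1), x ^ i / i !
        = ∑ i ∈ range (k + 1), x ^ i / i ! + x ^ (k + 1) / (k + 1)! := sum_range_succ _ _
      _ ≤ x / (x - m) * (m / x * (x ^ (k + 1) / (k + 1)!)) + x ^ (k + 1) / (k + 1)! := by
        gcongr
        exact (ih (by omega)).trans (by gcongr)
      _ = x / (x - m) * (x ^ (k + 1) / (k + 1)!) := by
        field_simp
        ring

theorem pi_gaussianReal_real_le_sum_sq_of_even (m : ℕ) {a : ℝ} (ha : 0 ≤ a) :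
    (Measure.pi fun _ : Fin (2 * (m + 1)) ↦ gaussianReal 0 1).real {x | a ≤ ∑ i, x i ^ 2}
      = exp (-(a / 2)) * ∑ i ∈ range (m + 1), (a / 2) ^ i / i ! := by
  have hzero : exp (-((0 : ℝ) ^ 2 / 2)) * ∑ i ∈ range (m + 1), ((0 : ℝ) ^ 2 / 2) ^ i / i ! = 1 := by
    simp [sum_range_succ']
  rw [pi_gaussianReal_real_le_sum_sq_eq_div (by positivity),
    show 2 * (m + 1) - 1 = 2 * m + 1 by omega, integral_Ioi_pow_mul_exp_neg_sq_div_two,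
    integral_Ioi_pow_mul_exp_neg_sq_div_two, Real.sq_sqrt ha, hzero, mul_one,
    mul_div_cancel_left₀ _ (by positivity)]

theorem stmt_4_general {Ω : Type*} [MeasurableSpace Ω] (P : Measure Ω)
    (d : ℕ) (hd : 0 < d) (ε : ℝ) (hε0 : 0 < ε)
    (Y : Fin (2 * d) → Ω → ℝ) (hmeas : ∀ j, Measurable (Y j))
    (hindep : iIndepFun Y P)
    (hdist : ∀ j, P.map (Y j) = gaussianReal 0 1) :
    (P {ω | (2 * d : ℝ) * (1 + ε) ≤ ∑ j, (Y j ω) ^ 2}).toReal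
      ≤ ((1 + ε) / ε) * (Real.exp (-((2 * d : ℝ) * (1 + ε) / 2)) *
          ((2 * d : ℝ) * (1 + ε) / 2) ^ (d - 1) / (Nat.factorial (d - 1))) := by
  obtain ⟨m, rfl⟩ : ∃ m, d = m + 1 := ⟨d - 1, by omega⟩
  have hlaw : P.map (fun ω j ↦ Y j ω) = Measure.pi fun _ ↦ gaussianReal 0 1 := by
    rw [hindep.map_fun_eq_pi_map fun j ↦ (hmeas j).aemeasurable]
    simp_rw [hdist]
  set a : ℝ := 2 * ((m + 1 : ℕ) : ℝ) * (1 + ε)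
  have hx : (m : ℝ) < a / 2 := by
    push_cast [a]
    nlinarith
  have htail : (P {ω | a ≤ ∑ j, Y j ω ^ 2}).toReal
      = exp (-(a / 2)) * ∑ i ∈ range (m + 1), (a / 2) ^ i / i ! := by
    rw [← pi_gaussianReal_real_le_sum_sq_of_even m (by positivity), ← hlaw,
      measureReal_def, Measure.map_apply (measurable_pi_lambda _ hmeas)
        (measurableSet_le measurable_const (by fun_prop))]
    rfl
  have hratio : a / 2 / (a / 2 - m) ≤ (1 + ε) / ε := by
    rw [div_le_div_iff₀ (sub_pos.mpr hx) hε0]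
    push_cast [a]
    nlinarith
  rw [htail, Nat.add_sub_cancel]
  calc exp (-(a / 2)) * ∑ i ∈ range (m + 1), (a / 2) ^ i / i !
      ≤ exp (-(a / 2)) * (a / 2 / (a / 2 - m) * ((a / 2) ^ m / m !)) := by
        gcongr
        exact sum_range_pow_div_factorial_le hx
    _ ≤ exp (-(a / 2)) * ((1 + ε) / ε * ((a / 2) ^ m / m !)) := by gcongr
    _ = _ := by ring

/-- Let `k = 2d` be an even positive integer, `0 < ε < 1`, and `Y₁, …, Y_k` i.i.d.
standard normals. With `λ₁ = k(1+ε)/2`, the right tail of the chi-squared statistic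
satisfies `P(∑ Yⱼ² ≥ k(1+ε)) ≤ ((1+ε)/ε) e^{-λ₁} λ₁^{d-1}/(d-1)!`. -/
theorem stmt_4 {Ω : Type*} [MeasurableSpace Ω] (P : Measure Ω) [IsProbabilityMeasure P]
    (d : ℕ) (hd : 0 < d) (ε : ℝ) (hε0 : 0 < ε) (hε1 : ε < 1)
    (Y : Fin (2 * d) → Ω → ℝ) (hmeas : ∀ j, Measurable (Y j))
    (hindep : iIndepFun Y P)
    (hdist : ∀ j, P.map (Y j) = gaussianReal 0 1) :
    (P {ω | (2 * d : ℝ) * (1 + ε) ≤ ∑ j, (Y j ω) ^ 2}).toReal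
      ≤ ((1 + ε) / ε) * (Real.exp (-((2 * d : ℝ) * (1 + ε) / 2)) *
          ((2 * d : ℝ) * (1 + ε) / 2) ^ (d - 1) / (Nat.factorial (d - 1))) :=
  stmt_4_general P d hd ε hε0 Y hmeas hindep hdist
end

section
/- Let k be a positive integer, 0 < ε < 1, and let Y₁, …, Y_k be i.i.d. standard normal random variables on a probability space (Ω, P). Then P( ∑_{j=1}^k Y_j² ≥ k(1+ε) ) ≤ exp( -(k/2)(ε - ln(1+ε)) ). -/
/-! Chernoff's method. For `2 v t < 1` the square of an `N(0, v)` variable has moment generating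
function `(1 - 2 v t)^{-1/2}` at `t` (a Gaussian integral), so by independence and Markov's
inequality `P(∑ Yⱼ² ≥ a) ≤ e^{-t a} (1 - 2t)^{-k/2}` for `0 ≤ t < 1/2`. The optimal choice
`t = ε / (2(1 + ε))` turns the right side into `exp(-(k/2)(ε - ln(1 + ε)))`. -/

open MeasureTheory ProbabilityTheory

namespace ProbabilityTheory

open Real
open scoped NNReal

lemma gaussianPDFReal_zero_mul_exp_mul_sq (v : ℝ≥0) (t x : ℝ) :
    gaussianPDFReal 0 v x * exp (t * x ^ 2)
      = (√(2 * π * v))⁻¹ * exp (-((2 * (v : ℝ))⁻¹ - t) * x ^ 2) := by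
  rw [gaussianPDFReal, mul_assoc, ← exp_add]
  congr 2
  ring

lemma mgf_sq_gaussianReal {v : ℝ≥0} {t : ℝ} (ht : 2 * v * t < 1) :
    mgf (fun x ↦ x ^ 2) (gaussianReal 0 v) t = (√(1 - 2 * v * t))⁻¹ := by
  rcases eq_or_ne v 0 with rfl | hv
  · simp [gaussianReal_zero_var, mgf]
  have hv' : (0 : ℝ) < v := by positivity
  have hb : 0 < (2 * (v : ℝ))⁻¹ - t := by
    rw [show (2 * (v : ℝ))⁻¹ - t = (1 - 2 * v * t) / (2 * v) by field_simp]
    exact div_pos (by linarith) (by positivity)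
  rw [mgf, integral_gaussianReal_eq_integral_smul hv]
  simp_rw [smul_eq_mul, gaussianPDFReal_zero_mul_exp_mul_sq]
  rw [integral_const_mul, integral_gaussian, ← sqrt_inv, ← sqrt_inv, ← sqrt_mul (by positivity)]
  congr 1
  field_simp

variable {Ω ι : Type*} {mΩ : MeasurableSpace Ω} {P : Measure Ω} {Y : ι → Ω → ℝ} {v : ℝ≥0} {t : ℝ}

lemma iIndepFun.mgf_sum_sq (hindep : iIndepFun Y P)
    (hY : ∀ i, P.map (Y i) = gaussianReal 0 v) (ht : 2 * v * t < 1) (s : Finset ι) :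
    mgf (fun ω ↦ ∑ i ∈ s, Y i ω ^ 2) P t = (√(1 - 2 * v * t))⁻¹ ^ s.card := by
  -- a map that is not a.e.-measurable pushes `P` forward to `0`, which is not Gaussian
  have hY_meas (i : ι) : AEMeasurable (Y i) P :=
    .of_map_ne_zero (by rw [hY i]; exact IsProbabilityMeasure.ne_zero _)
  have hsq_indep : iIndepFun (fun i ω ↦ Y i ω ^ 2) P :=
    hindep.comp (fun _ x ↦ x ^ 2) fun _ ↦ by fun_prop
  have hsq_mgf (i : ι) : mgf (fun ω ↦ Y i ω ^ 2) P t = (√(1 - 2 * v * t))⁻¹ := by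
    rw [← mgf_sq_gaussianReal ht, ← hY i, mgf_map (hY_meas i) (by fun_prop)]
    rfl
  calc mgf (fun ω ↦ ∑ i ∈ s, Y i ω ^ 2) P t = mgf (∑ i ∈ s, fun ω ↦ Y i ω ^ 2) P t := by
        simp only [Finset.sum_fn]
    _ = ∏ i ∈ s, mgf (fun ω ↦ Y i ω ^ 2) P t :=
        hsq_indep.mgf_sum₀ (fun i ↦ (hY_meas i).pow_const 2) s
    _ = (√(1 - 2 * v * t))⁻¹ ^ s.card := by simp only [hsq_mgf, Finset.prod_const]

lemma iIndepFun.measureReal_sum_sq_ge_le [IsFiniteMeasure P] (hindep : iIndepFun Y P)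
    (hY : ∀ i, P.map (Y i) = gaussianReal 0 v) (ht₀ : 0 ≤ t) (ht : 2 * v * t < 1)
    (s : Finset ι) (a : ℝ) :
    P.real {ω | a ≤ ∑ i ∈ s, Y i ω ^ 2} ≤ exp (-t * a) * (√(1 - 2 * v * t))⁻¹ ^ s.card := by
  have hmgf := hindep.mgf_sum_sq hY ht s
  have hint : Integrable (fun ω ↦ exp (t * ∑ i ∈ s, Y i ω ^ 2)) P := by
    refine .of_integral_ne_zero ?_
    rw [← mgf, hmgf]
    exact pow_ne_zero _ (inv_ne_zero (sqrt_ne_zero'.2 (by linarith)))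
  simpa only [hmgf] using measure_ge_le_exp_mul_mgf a ht₀ hint

end ProbabilityTheory

theorem stmt_8_general {Ω : Type*} [MeasurableSpace Ω] (P : Measure Ω) [IsProbabilityMeasure P]
    (k : ℕ) (ε : ℝ) (hε0 : 0 < ε)
    (Y : Fin k → Ω → ℝ)
    (hindep : iIndepFun Y P)
    (hdist : ∀ j, P.map (Y j) = gaussianReal 0 1) :
    (P {ω | (k : ℝ) * (1 + ε) ≤ ∑ j, (Y j ω) ^ 2}).toReal
      ≤ Real.exp (-((k : ℝ) / 2) * (ε - Real.log (1 + ε))) := by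
  have h1ε : 0 < 1 + ε := by linarith
  set t := ε / (2 * (1 + ε))
  have h2t : 1 - 2 * ((1 : NNReal) : ℝ) * t = (1 + ε)⁻¹ := by
    simp only [NNReal.coe_one, t]
    field_simp
    ring
  have hbound := hindep.measureReal_sum_sq_ge_le hdist (t := t) (by positivity)
    (by rw [← sub_pos, h2t]; positivity) Finset.univ ((k : ℝ) * (1 + ε))
  rw [← measureReal_def]
  refine hbound.trans_eq ?_
  rw [h2t, Real.sqrt_inv, inv_inv, Finset.card_univ, Fintype.card_fin,
    ← Real.exp_log (Real.sqrt_pos.2 h1ε), ← Real.exp_nat_mul, Real.log_sqrt h1ε.le, ← Real.exp_add]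
  congr 1
  simp only [t]
  field_simp
  ring

/-- Let `k` be a positive integer, `0 < ε < 1`, and `Y₁, …, Y_k` i.i.d. standard normals.
Then `P(∑ Yⱼ² ≥ k(1+ε)) ≤ exp(-(k/2)(ε - ln(1+ε)))`. -/
theorem stmt_8 {Ω : Type*} [MeasurableSpace Ω] (P : Measure Ω) [IsProbabilityMeasure P]
    (k : ℕ) (hk : 0 < k) (ε : ℝ) (hε0 : 0 < ε) (hε1 : ε < 1)
    (Y : Fin k → Ω → ℝ) (hmeas : ∀ j, Measurable (Y j))
    (hindep : iIndepFun Y P)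
    (hdist : ∀ j, P.map (Y j) = gaussianReal 0 1) :
    (P {ω | (k : ℝ) * (1 + ε) ≤ ∑ j, (Y j ω) ^ 2}).toReal
      ≤ Real.exp (-((k : ℝ) / 2) * (ε - Real.log (1 + ε))) :=
  stmt_8_general P k ε hε0 Y hindep hdist
end

section
/- Let 0 < ε < 1 and set a = √(2/π)(1+ε). The function A(s) = e^{-a s + s²/2} Φ(s) is strictly convex on (0, ∞); more precisely, its second derivative A''(s) = e^{-a s + s²/2} [ ((s-a)² + 1) Φ(s) + (s - 2a) φ(s) ] is strictly positive for all s > 0. -/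
open MeasureTheory ProbabilityTheory

/-- The standard normal cumulative distribution function. -/
noncomputable def stdNormalCDF (s : ℝ) : ℝ := (gaussianReal 0 1 (Set.Iic s)).toReal

/-- The standard normal density. -/
noncomputable def stdNormalPDF (s : ℝ) : ℝ := gaussianPDFReal 0 1 s

/-!
Write `Φ`, `φ` for the standard normal CDF and density and `t = s - a`; the formula for `A''`
comes from `Φ' = φ` and `φ'(s) = -s φ(s)`. For `s ≥ 0`, `φ` decreases on `[0, s]`, so
`Φ(s) ≥ 1/2 + s φ(s)` and the bracket is at least
`(t² + 1)/2 + φ(s) (s t² + 2t) ≥ ((t + 2φ(s))² + 1 - 4 φ(s)²)/2`,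
which is positive because `φ ≤ 1/√(2π) < 1/2`.
-/

open Real Set

lemma stdNormalPDF_eq (x : ℝ) : stdNormalPDF x = (√(2 * π))⁻¹ * exp (-x ^ 2 / 2) := by
  simp [stdNormalPDF, gaussianPDFReal]

lemma stdNormalPDF_pos (x : ℝ) : 0 < stdNormalPDF x :=
  gaussianPDFReal_pos 0 1 x one_ne_zero

lemma stdNormalPDF_neg (x : ℝ) : stdNormalPDF (-x) = stdNormalPDF x := by
  rw [stdNormalPDF_eq, stdNormalPDF_eq, neg_sq]

lemma stdNormalPDF_lt_half (x : ℝ) : stdNormalPDF x < 1 / 2 := by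
  have h_sqrt : 2 < √(2 * π) := (Real.lt_sqrt zero_le_two).2 (by nlinarith [pi_gt_three])
  calc stdNormalPDF x ≤ (√(2 * π))⁻¹ * 1 := by
        rw [stdNormalPDF_eq]
        gcongr
        exact exp_le_one_iff.2 (by nlinarith [sq_nonneg x])
    _ < 1 / 2 := by
        rw [mul_one, one_div]
        exact inv_strictAnti₀ two_pos h_sqrt

lemma stdNormalPDF_antitoneOn : AntitoneOn stdNormalPDF (Ici 0) := by
  intro x hx y _ hxy
  rw [stdNormalPDF_eq, stdNormalPDF_eq]
  gcongr

lemma hasDerivAt_stdNormalPDF (x : ℝ) : HasDerivAt stdNormalPDF (-x * stdNormalPDF x) x := by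
  have h_exponent : HasDerivAt (fun x => -x ^ 2 / 2) (-x) x :=
    ((hasDerivAt_pow 2 x).neg.div_const 2).congr_deriv (by ring)
  rw [show stdNormalPDF = fun x => (√(2 * π))⁻¹ * exp (-x ^ 2 / 2) from funext stdNormalPDF_eq]
  exact (h_exponent.exp.const_mul _).congr_deriv (by ring)

lemma continuous_stdNormalPDF : Continuous stdNormalPDF :=
  continuous_iff_continuousAt.2 fun x => (hasDerivAt_stdNormalPDF x).continuousAt

lemma integrable_stdNormalPDF : Integrable stdNormalPDF := integrable_gaussianPDFReal 0 1

lemma stdNormalCDF_eq_integral (s : ℝ) : stdNormalCDF s = ∫ x in Iic s, stdNormalPDF x := by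
  rw [stdNormalCDF, gaussianReal_apply_eq_integral 0 one_ne_zero,
    ENNReal.toReal_ofReal (integral_nonneg fun x => gaussianPDFReal_nonneg 0 1 x)]
  rfl

lemma stdNormalCDF_zero : stdNormalCDF 0 = 1 / 2 := by
  have h_symm : ∫ x in Iic (0 : ℝ), stdNormalPDF x = ∫ x in Ioi (0 : ℝ), stdNormalPDF x := by
    simpa only [stdNormalPDF_neg, neg_zero] using integral_comp_neg_Iic (0 : ℝ) stdNormalPDF
  have h_total : (∫ x in Iic (0 : ℝ), stdNormalPDF x) + ∫ x in Ioi (0 : ℝ), stdNormalPDF x = 1 := by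
    rw [intervalIntegral.integral_Iic_add_Ioi integrable_stdNormalPDF.integrableOn
      integrable_stdNormalPDF.integrableOn]
    exact integral_gaussianPDFReal_eq_one 0 one_ne_zero
  rw [stdNormalCDF_eq_integral]
  linarith

lemma stdNormalCDF_eq_half_add_integral (s : ℝ) :
    stdNormalCDF s = 1 / 2 + ∫ x in (0 : ℝ)..s, stdNormalPDF x := by
  rw [← intervalIntegral.integral_Iic_sub_Iic integrable_stdNormalPDF.integrableOn
    integrable_stdNormalPDF.integrableOn, ← stdNormalCDF_eq_integral, ← stdNormalCDF_eq_integral,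
    stdNormalCDF_zero]
  ring

lemma hasDerivAt_stdNormalCDF (s : ℝ) : HasDerivAt stdNormalCDF (stdNormalPDF s) s := by
  rw [show stdNormalCDF = fun u => 1 / 2 + ∫ x in (0 : ℝ)..u, stdNormalPDF x from
    funext stdNormalCDF_eq_half_add_integral]
  exact (intervalIntegral.integral_hasDerivAt_right integrable_stdNormalPDF.intervalIntegrable
    continuous_stdNormalPDF.stronglyMeasurable.stronglyMeasurableAtFilter
    continuous_stdNormalPDF.continuousAt).const_add _

lemma half_add_mul_stdNormalPDF_le_stdNormalCDF {s : ℝ} (hs : 0 ≤ s) :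
    1 / 2 + s * stdNormalPDF s ≤ stdNormalCDF s := by
  have h := intervalIntegral.integral_mono_on hs intervalIntegrable_const
    integrable_stdNormalPDF.intervalIntegrable
    fun x hx => stdNormalPDF_antitoneOn hx.1 (hx.1.trans hx.2) hx.2
  rw [intervalIntegral.integral_const, smul_eq_mul, sub_zero] at h
  rw [stdNormalCDF_eq_half_add_integral]
  linarith

lemma sq_sub_add_one_mul_stdNormalCDF_add_pos (a : ℝ) {s : ℝ} (hs : 0 ≤ s) :
    0 < ((s - a) ^ 2 + 1) * stdNormalCDF s + (s - 2 * a) * stdNormalPDF s := by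
  set φ := stdNormalPDF s
  have hφ_pos : 0 < φ := stdNormalPDF_pos s
  have hφ_lt : φ < 1 / 2 := stdNormalPDF_lt_half s
  have hΦ := mul_le_mul_of_nonneg_left (half_add_mul_stdNormalPDF_le_stdNormalCDF hs)
    (by positivity : 0 ≤ (s - a) ^ 2 + 1)
  have h_drop : 0 ≤ φ * s * (s - a) ^ 2 := by positivity
  calc 0 < ((s - a + 2 * φ) ^ 2 + (1 - 4 * φ ^ 2)) / 2 := by nlinarith
    _ = ((s - a) ^ 2 + 1) * (1 / 2) + 2 * φ * (s - a) := by ring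
    _ ≤ ((s - a) ^ 2 + 1) * (1 / 2 + s * φ) + (s - 2 * a) * φ := by nlinarith
    _ ≤ ((s - a) ^ 2 + 1) * stdNormalCDF s + (s - 2 * a) * φ := by linarith

section TiltedCDF

variable (a : ℝ)

lemma hasDerivAt_exp_tilt (s : ℝ) :
    HasDerivAt (fun s => exp (-(a * s) + s ^ 2 / 2)) ((s - a) * exp (-(a * s) + s ^ 2 / 2)) s := by
  have h_exponent : HasDerivAt (fun s => -(a * s) + s ^ 2 / 2) (s - a) s :=
    (((hasDerivAt_id s).const_mul a).neg.add ((hasDerivAt_pow 2 s).div_const 2)).congr_deriv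
      (by push_cast; ring)
  exact h_exponent.exp.congr_deriv (mul_comm _ _)

lemma hasDerivAt_exp_tilt_mul_stdNormalCDF (s : ℝ) :
    HasDerivAt (fun s => exp (-(a * s) + s ^ 2 / 2) * stdNormalCDF s)
      (exp (-(a * s) + s ^ 2 / 2) * ((s - a) * stdNormalCDF s + stdNormalPDF s)) s :=
  ((hasDerivAt_exp_tilt a s).mul (hasDerivAt_stdNormalCDF s)).congr_deriv (by ring)

lemma hasDerivAt_deriv_exp_tilt_mul_stdNormalCDF (s : ℝ) :
    HasDerivAt (fun s => exp (-(a * s) + s ^ 2 / 2) * ((s - a) * stdNormalCDF s + stdNormalPDF s))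
      (exp (-(a * s) + s ^ 2 / 2) *
        (((s - a) ^ 2 + 1) * stdNormalCDF s + (s - 2 * a) * stdNormalPDF s)) s := by
  have h_factor : HasDerivAt (fun s => (s - a) * stdNormalCDF s + stdNormalPDF s)
      (stdNormalCDF s - a * stdNormalPDF s) s :=
    ((((hasDerivAt_id s).sub_const a).mul (hasDerivAt_stdNormalCDF s)).add
      (hasDerivAt_stdNormalPDF s)).congr_deriv (by simp only [id_eq]; ring)
  exact ((hasDerivAt_exp_tilt a s).mul h_factor).congr_deriv (by ring)

lemma iteratedDeriv_two_exp_tilt_mul_stdNormalCDF (s : ℝ) :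
    iteratedDeriv 2 (fun s => exp (-(a * s) + s ^ 2 / 2) * stdNormalCDF s) s =
      exp (-(a * s) + s ^ 2 / 2) *
        (((s - a) ^ 2 + 1) * stdNormalCDF s + (s - 2 * a) * stdNormalPDF s) := by
  rw [iteratedDeriv_succ, iteratedDeriv_one,
    funext fun s => (hasDerivAt_exp_tilt_mul_stdNormalCDF a s).deriv]
  exact (hasDerivAt_deriv_exp_tilt_mul_stdNormalCDF a s).deriv

end TiltedCDF

theorem stmt_10_general (a : ℝ) :
    StrictConvexOn ℝ (Set.Ioi (0 : ℝ))
      (fun s : ℝ => Real.exp (-(a * s) + s ^ 2 / 2) * stdNormalCDF s) ∧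
    ∀ s : ℝ, 0 < s →
      iteratedDeriv 2 (fun s : ℝ => Real.exp (-(a * s) + s ^ 2 / 2) * stdNormalCDF s) s
          = Real.exp (-(a * s) + s ^ 2 / 2) *
            (((s - a) ^ 2 + 1) * stdNormalCDF s + (s - 2 * a) * stdNormalPDF s) ∧
        0 < Real.exp (-(a * s) + s ^ 2 / 2) *
            (((s - a) ^ 2 + 1) * stdNormalCDF s + (s - 2 * a) * stdNormalPDF s) := by
  have h_pos : ∀ s : ℝ, 0 < s → 0 < exp (-(a * s) + s ^ 2 / 2) *
      (((s - a) ^ 2 + 1) * stdNormalCDF s + (s - 2 * a) * stdNormalPDF s) := fun s hs =>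
    mul_pos (exp_pos _) (sq_sub_add_one_mul_stdNormalCDF_add_pos a hs.le)
  refine ⟨?_, fun s hs => ⟨iteratedDeriv_two_exp_tilt_mul_stdNormalCDF a s, h_pos s hs⟩⟩
  refine strictConvexOn_of_deriv2_pos' (convex_Ioi 0) ?_ fun s hs => ?_
  · exact fun s _ => (hasDerivAt_exp_tilt_mul_stdNormalCDF a s).continuousAt.continuousWithinAt
  · rw [← iteratedDeriv_eq_iterate, iteratedDeriv_two_exp_tilt_mul_stdNormalCDF]
    exact h_pos s hs

/-- For `0 < ε < 1` and `a = √(2/π)(1+ε)`, the function `A(s) = e^{-as+s²/2} Φ(s)` is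
strictly convex on `(0, ∞)`; more precisely its second derivative is
`A''(s) = e^{-as+s²/2}[((s-a)²+1)Φ(s) + (s-2a)φ(s)]`, which is strictly positive for
all `s > 0`. -/
theorem stmt_10 (ε : ℝ) (hε0 : 0 < ε) (hε1 : ε < 1) (a : ℝ)
    (ha : a = Real.sqrt (2 / Real.pi) * (1 + ε)) :
    StrictConvexOn ℝ (Set.Ioi (0 : ℝ))
      (fun s : ℝ => Real.exp (-(a * s) + s ^ 2 / 2) * stdNormalCDF s) ∧
    ∀ s : ℝ, 0 < s →
      iteratedDeriv 2 (fun s : ℝ => Real.exp (-(a * s) + s ^ 2 / 2) * stdNormalCDF s) s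
          = Real.exp (-(a * s) + s ^ 2 / 2) *
            (((s - a) ^ 2 + 1) * stdNormalCDF s + (s - 2 * a) * stdNormalPDF s) ∧
        0 < Real.exp (-(a * s) + s ^ 2 / 2) *
            (((s - a) ^ 2 + 1) * stdNormalCDF s + (s - 2 * a) * stdNormalPDF s) :=
  stmt_10_general a
end

section
/- For every real ζ > 0, the inverse Mill's ratio satisfies φ(ζ) / (1 - Φ(ζ)) > 2√(2/π) · Φ(ζ), where φ is the standard normal density and Φ the standard normal CDF. -/
/-!
Write `w = P(|X| ≤ ζ)` for a standard normal `X`. By symmetry `Φ(ζ) = (1 + w)/2` and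
`1 - Φ(ζ) = (1 - w)/2`, so after multiplying out, the inequality says `exp (-ζ²/2) > 1 - w²`,
that is, for independent standard normals `X, Y`,
`P(|X| ≤ ζ, |Y| ≤ ζ) = w² > 1 - exp (-ζ²/2) = P(X² + Y² ≤ ζ²)`.
The right-hand probability is computed in polar coordinates, and it is strictly smaller because
the square `[-ζ, ζ]²` contains the disc of radius `ζ` together with corners of positive area.
-/

open MeasureTheory ProbabilityTheory

open Real Set

lemma gaussianPDFReal_zero_one (t : ℝ) :
    gaussianPDFReal 0 1 t = exp (-(t ^ 2) / 2) / √(2 * π) := by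
  simp [gaussianPDFReal, div_eq_inv_mul]

lemma gaussianReal_real_eq_integral (s : Set ℝ) :
    (gaussianReal 0 1).real s = ∫ t in s, gaussianPDFReal 0 1 t := by
  rw [measureReal_def, gaussianReal_apply_eq_integral 0 one_ne_zero,
    ENNReal.toReal_ofReal (integral_nonneg fun t ↦ gaussianPDFReal_nonneg 0 1 t)]

lemma gaussianReal_real_Iio_neg (v : NNReal) (s : ℝ) :
    (gaussianReal 0 v).real (Iio (-s)) = (gaussianReal 0 v).real (Ioi s) := calc
  _ = ((gaussianReal 0 v).map (fun x ↦ -x)).real (Ioi s) := by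
    rw [map_measureReal_apply measurable_neg measurableSet_Ioi]
    simp
  _ = _ := by rw [gaussianReal_map_neg, neg_zero]

lemma one_sub_stdNormalCDF (s : ℝ) : 1 - stdNormalCDF s = (gaussianReal 0 1).real (Ioi s) := by
  rw [stdNormalCDF, ← measureReal_def, ← compl_Iic, probReal_compl_eq_one_sub measurableSet_Iic]

lemma stdNormalCDF_lt_one (s : ℝ) : stdNormalCDF s < 1 := by
  have htail : 0 < (gaussianReal 0 1).real (Ioi s) := by
    rw [gaussianReal_real_eq_integral, setIntegral_pos_iff_support_of_nonneg_ae
      (.of_forall fun t ↦ gaussianPDFReal_nonneg 0 1 t)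
      (integrable_gaussianPDFReal 0 1).integrableOn,
      Function.support_eq_univ fun t ↦ (gaussianPDFReal_pos 0 1 t one_ne_zero).ne', univ_inter,
      Real.volume_Ioi]
    exact ENNReal.zero_lt_top
  linarith [one_sub_stdNormalCDF s]

lemma stdNormalCDF_eq_of_nonneg {s : ℝ} (hs : 0 ≤ s) :
    stdNormalCDF s = (1 + (gaussianReal 0 1).real (Icc (-s) s)) / 2 := by
  have hsplit : stdNormalCDF s =
      (gaussianReal 0 1).real (Iio (-s)) + (gaussianReal 0 1).real (Icc (-s) s) := by
    rw [stdNormalCDF, ← measureReal_def, ← Iio_union_Icc_eq_Iic (a := -s) (by linarith),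
      measureReal_union ((Iio_disjoint_Ici le_rfl).mono_right Icc_subset_Ici_self)
        measurableSet_Icc]
  rw [gaussianReal_real_Iio_neg, ← one_sub_stdNormalCDF] at hsplit
  linarith

lemma integral_Ioc_mul_exp_neg_sq_div_two {x : ℝ} (hx : 0 ≤ x) :
    ∫ r in Ioc 0 x, r * exp (-(r ^ 2) / 2) = 1 - exp (-(x ^ 2) / 2) := by
  have hderiv (r : ℝ) :
      HasDerivAt (fun r ↦ -exp (-(r ^ 2) / 2)) (r * exp (-(r ^ 2) / 2)) r :=
    ((hasDerivAt_pow 2 r).neg.div_const 2).exp.neg.congr_deriv (by simp; ring)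
  rw [← intervalIntegral.integral_of_le hx, intervalIntegral.integral_eq_sub_of_hasDerivAt
    (fun r _ ↦ hderiv r)
    ((by fun_prop : Continuous fun r : ℝ ↦ r * exp (-(r ^ 2) / 2)).intervalIntegrable 0 x)]
  simp only [ne_eq, OfNat.ofNat_ne_zero, not_false_eq_true, zero_pow, neg_zero, zero_div, exp_zero,
    sub_neg_eq_add]
  ring

lemma integral_disc_exp_neg_sq_div_two {x : ℝ} (hx : 0 ≤ x) :
    ∫ p in {p : ℝ × ℝ | p.1 ^ 2 + p.2 ^ 2 ≤ x ^ 2}, exp (-(p.1 ^ 2 + p.2 ^ 2) / 2)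
      = 2 * π * (1 - exp (-(x ^ 2) / 2)) := by
  set D := {p : ℝ × ℝ | p.1 ^ 2 + p.2 ^ 2 ≤ x ^ 2}
  have hD : MeasurableSet D := measurableSet_le (by fun_prop) measurable_const
  have hpolar : ∀ p ∈ polarCoord.target,
      p.1 • D.indicator (fun p ↦ exp (-(p.1 ^ 2 + p.2 ^ 2) / 2)) (polarCoord.symm p)
        = (Iic x ×ˢ univ).indicator (fun p ↦ p.1 * exp (-(p.1 ^ 2) / 2)) p := by
    rintro ⟨r, θ⟩ ⟨hr, -⟩
    have hnorm : (r * cos θ) ^ 2 + (r * sin θ) ^ 2 = r ^ 2 := by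
      linear_combination r ^ 2 * sin_sq_add_cos_sq θ
    have hmem : polarCoord.symm (r, θ) ∈ D ↔ (r, θ) ∈ Iic x ×ˢ univ := by
      simp [D, polarCoord_symm_apply, hnorm, pow_le_pow_iff_left₀ (le_of_lt hr) hx]
    by_cases h : (r, θ) ∈ Iic x ×ˢ univ
    · rw [indicator_of_mem (hmem.mpr h), indicator_of_mem h]
      simp [polarCoord_symm_apply, hnorm]
    · rw [indicator_of_notMem (mt hmem.mp h), indicator_of_notMem h, smul_zero]
  calc _ = ∫ p in polarCoord.target,
        p.1 • D.indicator (fun p ↦ exp (-(p.1 ^ 2 + p.2 ^ 2) / 2)) (polarCoord.symm p) := by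
        rw [integral_comp_polarCoord_symm, integral_indicator hD]
    _ = ∫ p in polarCoord.target ∩ (Iic x ×ˢ univ), p.1 * exp (-(p.1 ^ 2) / 2) := by
        rw [setIntegral_congr_fun polarCoord.open_target.measurableSet hpolar,
          setIntegral_indicator (measurableSet_Iic.prod .univ)]
    _ = (∫ r in Ioc 0 x, r * exp (-(r ^ 2) / 2)) * ∫ _ in Ioo (-π) π, (1 : ℝ) := by
        rw [polarCoord_target, prod_inter_prod, Ioi_inter_Iic, inter_univ, Measure.volume_eq_prod,
          ← setIntegral_prod_mul]
        simp only [mul_one]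
    _ = _ := by
        rw [integral_Ioc_mul_exp_neg_sq_div_two hx, setIntegral_const,
          Real.volume_real_Ioo_of_le (by linarith [pi_pos])]
        simp only [sub_neg_eq_add, smul_eq_mul, mul_one]
        ring

lemma integral_square_exp_neg_sq_div_two (x : ℝ) :
    ∫ p in Icc (-x) x ×ˢ Icc (-x) x, exp (-(p.1 ^ 2 + p.2 ^ 2) / 2)
      = (∫ t in Icc (-x) x, exp (-(t ^ 2) / 2)) ^ 2 := by
  rw [sq, Measure.volume_eq_prod, ← setIntegral_prod_mul]
  congr with p
  rw [← exp_add]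
  ring_nf

lemma integral_disc_lt_integral_square {x : ℝ} (hx : 0 < x) :
    ∫ p in {p : ℝ × ℝ | p.1 ^ 2 + p.2 ^ 2 ≤ x ^ 2}, exp (-(p.1 ^ 2 + p.2 ^ 2) / 2)
      < ∫ p in Icc (-x) x ×ˢ Icc (-x) x, exp (-(p.1 ^ 2 + p.2 ^ 2) / 2) := by
  set D := {p : ℝ × ℝ | p.1 ^ 2 + p.2 ^ 2 ≤ x ^ 2}
  set S := Icc (-x) x ×ˢ Icc (-x) x
  set g : ℝ × ℝ → ℝ := fun p ↦ exp (-(p.1 ^ 2 + p.2 ^ 2) / 2)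
  have hD : MeasurableSet D := measurableSet_le (by fun_prop) measurable_const
  have hDS : D ⊆ S := by
    intro p (hp : p.1 ^ 2 + p.2 ^ 2 ≤ x ^ 2)
    exact ⟨abs_le_of_sq_le_sq' (by nlinarith) hx.le, abs_le_of_sq_le_sq' (by nlinarith) hx.le⟩
  have hg : IntegrableOn g S :=
    (by fun_prop : Continuous g).continuousOn.integrableOn_compact
      (isCompact_Icc.prod isCompact_Icc)
  -- `2 (4/5)² > 1`, so this corner of the square lies outside the disc.
  have hcorner : Ioo (4 * x / 5) x ×ˢ Ioo (4 * x / 5) x ⊆ S \ D := by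
    rintro ⟨a, b⟩ ⟨⟨ha, ha'⟩, hb, hb'⟩
    refine ⟨⟨⟨by linarith, ha'.le⟩, by linarith, hb'.le⟩, fun h ↦ ?_⟩
    change a ^ 2 + b ^ 2 ≤ x ^ 2 at h
    nlinarith
  have hpos : 0 < ∫ p in S \ D, g p := by
    rw [setIntegral_pos_iff_support_of_nonneg_ae (.of_forall fun p ↦ (exp_pos _).le)
      (hg.mono_set sdiff_subset), Function.support_eq_univ fun p ↦ (exp_pos _).ne', univ_inter]
    refine lt_of_lt_of_le ?_ (measure_mono hcorner)
    rw [Measure.volume_eq_prod, Measure.prod_prod, Real.volume_Ioo]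
    have : 0 < x - 4 * x / 5 := by linarith
    positivity
  linarith [setIntegral_sdiff hD hg hDS]

lemma one_sub_exp_lt_sq_gaussianReal_Icc {x : ℝ} (hx : 0 < x) :
    1 - exp (-(x ^ 2) / 2) < (gaussianReal 0 1).real (Icc (-x) x) ^ 2 := by
  have hw : (gaussianReal 0 1).real (Icc (-x) x)
      = (∫ t in Icc (-x) x, exp (-(t ^ 2) / 2)) / √(2 * π) := by
    simp_rw [gaussianReal_real_eq_integral, gaussianPDFReal_zero_one, integral_div]
  have hsq : √(2 * π) ^ 2 = 2 * π := sq_sqrt (by positivity)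
  have hlt := integral_disc_lt_integral_square hx
  rw [integral_disc_exp_neg_sq_div_two hx.le, integral_square_exp_neg_sq_div_two] at hlt
  rw [hw, div_pow, hsq, lt_div_iff₀ (by positivity)]
  linarith

/-- For every `ζ > 0`, the inverse Mill's ratio satisfies
`φ(ζ)/(1-Φ(ζ)) > 2√(2/π) Φ(ζ)`. -/
theorem stmt_13 (ζ : ℝ) (hζ : 0 < ζ) :
    stdNormalPDF ζ / (1 - stdNormalCDF ζ) > 2 * Real.sqrt (2 / Real.pi) * stdNormalCDF ζ := by
  set w := (gaussianReal 0 1).real (Icc (-ζ) ζ)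
  have hΦ : stdNormalCDF ζ = (1 + w) / 2 := stdNormalCDF_eq_of_nonneg hζ.le
  have hsqrt : √(2 / π) = 2 / √(2 * π) := by
    rw [show 2 / π = 2 ^ 2 / (2 * π) by field_simp, sqrt_div' _ (by positivity),
      sqrt_sq zero_le_two]
  rw [gt_iff_lt, lt_div_iff₀ (sub_pos.mpr (stdNormalCDF_lt_one ζ))]
  calc 2 * √(2 / π) * stdNormalCDF ζ * (1 - stdNormalCDF ζ) = (1 - w ^ 2) / √(2 * π) := by
        rw [hΦ, hsqrt]
        ring
    _ < exp (-(ζ ^ 2) / 2) / √(2 * π) := by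
        gcongr
        linarith [one_sub_exp_lt_sq_gaussianReal_Icc hζ]
    _ = stdNormalPDF ζ := by rw [stdNormalPDF, gaussianPDFReal_zero_one]
end

section
/- For every real x and for q ∈ {1, 2, 3}, one has 1 + (1/q)·(cosh(x√q) - 1) ≤ e^{x²/2}. -/
/-! Both sides are power series in `x²` with nonnegative coefficients: the left side is
`1 + ∑_{n ≥ 1} q^{n-1} x^{2n} / (2n)!` and the right side is `∑ x^{2n} / (2^n n!)`.
Since `(2n)! = 2^n n! (2n-1)‼`, the termwise comparison is `q^{n-1} ≤ 3^{n-1} ≤ (2n-1)‼`,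
which holds for every real `0 < q ≤ 3`. -/

open Nat Real

theorem Nat.three_pow_le_doubleFactorial_two_mul_add_one (n : ℕ) : 3 ^ n ≤ (2 * n + 1)‼ := by
  induction n with
  | zero => simp
  | succ n ih =>
    rw [show 2 * (n + 1) + 1 = 2 * n + 1 + 2 by ring, doubleFactorial_add_two, pow_succ']
    exact Nat.mul_le_mul (by omega) ih

theorem Nat.factorial_two_mul_add_two (n : ℕ) :
    (2 * n + 2)! = 2 ^ (n + 1) * (n + 1)! * (2 * n + 1)‼ := by
  rw [factorial_eq_mul_doubleFactorial, show 2 * n + 1 + 1 = 2 * (n + 1) by ring,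
    doubleFactorial_two_mul]

theorem Real.pow_div_factorial_two_mul_add_two_le {q : ℝ} (hq₀ : 0 ≤ q) (hq₃ : q ≤ 3) (n : ℕ) :
    q ^ n / (2 * n + 2)! ≤ 1 / (2 ^ (n + 1) * (n + 1)!) := by
  have h : q ^ n ≤ (2 * n + 1)‼ :=
    calc q ^ n ≤ 3 ^ n := by gcongr
      _ ≤ (2 * n + 1)‼ := mod_cast Nat.three_pow_le_doubleFactorial_two_mul_add_one n
  rw [Nat.factorial_two_mul_add_two, div_le_div_iff₀ (by positivity) (by positivity)]
  push_cast
  nlinarith [show (0 : ℝ) < 2 ^ (n + 1) * (n + 1)! by positivity]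

theorem Real.hasSum_cosh_sub_one (y : ℝ) :
    HasSum (fun n : ℕ ↦ y ^ (2 * n + 2) / (2 * n + 2)!) (cosh y - 1) := by
  simpa [mul_add] using (hasSum_nat_add_iff' 1).2 (hasSum_cosh y)

theorem Real.hasSum_exp_sub_one (t : ℝ) :
    HasSum (fun n : ℕ ↦ t ^ (n + 1) / (n + 1)!) (exp t - 1) := by
  simpa [exp_eq_exp_ℝ] using (hasSum_nat_add_iff' 1).2 (NormedSpace.expSeries_div_hasSum_exp t)

theorem Real.one_add_one_div_mul_cosh_sub_one_le_exp {q : ℝ} (hq₀ : 0 < q) (hq₃ : q ≤ 3)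
    (x : ℝ) : 1 + 1 / q * (cosh (x * √q) - 1) ≤ exp (x ^ 2 / 2) := by
  have hterm (n : ℕ) : 1 / q * ((x * √q) ^ (2 * n + 2) / (2 * n + 2)!) ≤
      (x ^ 2 / 2) ^ (n + 1) / (n + 1)! :=
    calc 1 / q * ((x * √q) ^ (2 * n + 2) / (2 * n + 2)!)
        = (x ^ 2) ^ (n + 1) * (q ^ n / (2 * n + 2)!) := by
          rw [show 2 * n + 2 = 2 * (n + 1) by ring, pow_mul, mul_pow, sq_sqrt hq₀.le]
          field_simp
          ring
      _ ≤ (x ^ 2) ^ (n + 1) * (1 / (2 ^ (n + 1) * (n + 1)!)) := by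
          have := pow_div_factorial_two_mul_add_two_le hq₀.le hq₃ n
          gcongr
      _ = (x ^ 2 / 2) ^ (n + 1) / (n + 1)! := by rw [div_pow]; ring
  have := hasSum_le hterm ((hasSum_cosh_sub_one _).mul_left (1 / q)) (hasSum_exp_sub_one _)
  linarith

/-- For every real `x` and `q ∈ {1,2,3}`,
`1 + (1/q)(cosh(x√q) - 1) ≤ e^{x²/2}`. -/
theorem stmt_16 (x : ℝ) (q : ℕ) (hq : q = 1 ∨ q = 2 ∨ q = 3) :
    1 + (1 / (q : ℝ)) * (Real.cosh (x * Real.sqrt q) - 1) ≤ Real.exp (x ^ 2 / 2) := by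
  obtain ⟨hq₀, hq₃⟩ : (0 : ℝ) < q ∧ (q : ℝ) ≤ 3 := by
    rcases hq with rfl | rfl | rfl <;> norm_num
  exact one_add_one_div_mul_cosh_sub_one_le_exp hq₀ hq₃ x
end
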